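/- For any integer n ≥ 7, the wheel graph W_{1,n} = K_1 + C_n satisfies dim_2(W_{1,n}) = ⌈n/2⌉, dim_3(W_{1,n}) = n − ⌊n/5⌋, and dim_4(W_{1,n}) = n. -/

import Mathlib

/-!
In `K₁ + Cₙ` all distances are at most two, so a rim vertex `w` distinguishes two rim
vertices `a ≠ b` iff `w ∈ (N(a) △ N(b)) ∪ {a, b}`, while the centre distinguishes no two rim
vertices. On the cycle these sets are the windows `{x, x+1, x+2, x+3}` (for `a`, `b` adjacent)
and `{x, x+1, x+3, x+4}` (for `a`, `b` at distance two); for `a`, `b` further apart they contain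
the disjoint triples `{a-1, a, a+1}` and `{b-1, b, b+1}`. Hence, for `k ≥ 2`, the rim part `R`
of a `k`-metric generator is exactly a set meeting every window in at least `k` vertices, and
the pairs involving the centre cost nothing once `|R| ≥ k + 2`.

Double counting the windows gives `4|R| ≥ kn`, the lower bound for `k = 2, 4`. For `k = 3` the
vertices missing from `R` are pairwise more than four apart, so there are at most `n/5` of them.
The bounds are attained by the whole rim and by the complements of `{1, 3, 5, …}` and of
`{4, 9, 14, …}`.
-/

open SimpleGraph

/-- `S` is a `k`-metric generator for `G`: every pair of distinct vertices is
distinguished (has different distances) by at least `k` vertices of `S`. -/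
def kMetricGen {V : Type*} [Fintype V] (G : SimpleGraph V) (k : ℕ) (S : Set V) : Prop :=
  ∀ u v : V, u ≠ v → ∃ T : Finset V, ↑T ⊆ S ∧ k ≤ T.card ∧ ∀ w ∈ T, G.dist u w ≠ G.dist v w

/-- `G` is `k`-metric dimensional: `k` is the largest integer admitting a `k`-metric generator. -/
def kMetricDimensional {V : Type*} [Fintype V] (G : SimpleGraph V) (k : ℕ) : Prop :=
  (∃ S : Set V, kMetricGen G k S) ∧ ∀ k' : ℕ, (∃ S : Set V, kMetricGen G k' S) → k' ≤ k

/-- The `k`-metric dimension of `G`. -/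
noncomputable def kMetricDim {V : Type*} [Fintype V] (G : SimpleGraph V) (k : ℕ) : ℕ :=
  sInf {m | ∃ S : Finset V, kMetricGen G k ↑S ∧ S.card = m}

/-- A `k`-metric basis: a minimum-cardinality `k`-metric generator. -/
def kMetricBasis {V : Type*} [Fintype V] (G : SimpleGraph V) (k : ℕ) (B : Finset V) : Prop :=
  kMetricGen G k ↑B ∧ ∀ T : Finset V, kMetricGen G k ↑T → B.card ≤ T.card

/-- Auxiliary relation for the corona product. -/
def coronaRel {V : Type*} {W : V → Type*} (G : SimpleGraph V) (H : ∀ v, SimpleGraph (W v)) :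
    (V ⊕ (Σ v, W v)) → (V ⊕ (Σ v, W v)) → Prop
  | Sum.inl a, Sum.inl b => G.Adj a b
  | Sum.inl a, Sum.inr b => a = b.1
  | Sum.inr a, Sum.inr b => ∃ h : a.1 = b.1, (H b.1).Adj (h ▸ a.2) b.2
  | _, _ => False

/-- The corona product `G ⊙ 𝓗`: one copy of `G`, and each vertex `v` of `G` joined by an
edge to every vertex of its own copy of `H v`. -/
def corona {V : Type*} {W : V → Type*} (G : SimpleGraph V) (H : ∀ v, SimpleGraph (W v)) :
    SimpleGraph (V ⊕ (Σ v, W v)) :=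
  SimpleGraph.fromRel (coronaRel G H)

/-- The join `K₁ + H`: a new vertex (`none`) adjacent to every vertex of `H`. -/
def K1join {U : Type*} (H : SimpleGraph U) : SimpleGraph (Option U) :=
  SimpleGraph.fromRel (fun x y => match x, y with
    | none, some _ => True
    | some a, some b => H.Adj a b
    | _, _ => False)

/-- `𝒞(H) = min_{x ≠ y} |(N(x) △ N(y)) ∪ {x,y}|`. -/
noncomputable def CC {U : Type*} (H : SimpleGraph U) : ℕ :=
  sInf {m | ∃ x y : U, x ≠ y ∧
    (symmDiff (H.neighborSet x) (H.neighborSet y) ∪ {x, y}).ncard = m}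

open Finset

section DiameterTwo

variable {V : Type*} {G : SimpleGraph V}

open Classical in
lemma SimpleGraph.dist_eq_ite_of_dist_le_two (hG : G.Connected) (h2 : ∀ u v, G.dist u v ≤ 2)
    (u v : V) : G.dist u v = if u = v then 0 else if G.Adj u v then 1 else 2 := by
  split_ifs with huv hadj
  · rw [huv, SimpleGraph.dist_self]
  · exact SimpleGraph.dist_eq_one_iff_adj.mpr hadj
  · have hpos := (hG.preconnected u v).pos_dist_of_ne huv
    have hne : G.dist u v ≠ 1 := fun h => hadj (SimpleGraph.dist_eq_one_iff_adj.mp h)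
    have := h2 u v
    omega

lemma SimpleGraph.dist_ne_dist_iff_of_dist_le_two (hG : G.Connected)
    (h2 : ∀ u v, G.dist u v ≤ 2) {u v : V} (huv : u ≠ v) (w : V) :
    G.dist u w ≠ G.dist v w ↔ w = u ∨ w = v ∨ ¬(G.Adj u w ↔ G.Adj v w) := by
  classical
  rw [G.dist_eq_ite_of_dist_le_two hG h2 u w, G.dist_eq_ite_of_dist_le_two hG h2 v w]
  split_ifs <;> simp_all [eq_comm]

end DiameterTwo

section Join

variable {U : Type*} {H : SimpleGraph U}

lemma K1join_adj_none_some (x : U) : (K1join H).Adj none (some x) := by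
  simp [K1join]

lemma K1join_adj_some_some {a b : U} : (K1join H).Adj (some a) (some b) ↔ H.Adj a b := by
  simp only [K1join, SimpleGraph.fromRel_adj, ne_eq, Option.some.injEq]
  exact ⟨fun ⟨_, h⟩ => h.elim id fun h => h.symm, fun h => ⟨h.ne, .inl h⟩⟩

lemma K1join_dist_none_le_one (u : Option U) : (K1join H).dist u none ≤ 1 := by
  cases u with
  | none => simp
  | some x => exact (SimpleGraph.dist_eq_one_iff_adj.mpr (K1join_adj_none_some x).symm).le

lemma K1join_connected : (K1join H).Connected := by
  refine SimpleGraph.connected_iff_exists_forall_reachable _ |>.mpr ⟨none, fun u => ?_⟩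
  cases u with
  | none => rfl
  | some x => exact (K1join_adj_none_some x).reachable

lemma K1join_dist_le_two (u v : Option U) : (K1join H).dist u v ≤ 2 :=
  calc (K1join H).dist u v ≤ (K1join H).dist u none + (K1join H).dist none v :=
        K1join_connected.dist_triangle
    _ ≤ 1 + 1 := by
        gcongr
        · exact K1join_dist_none_le_one u
        · rw [SimpleGraph.dist_comm]; exact K1join_dist_none_le_one v

lemma K1join_dist_none_ne_iff (a x : U) :
    (K1join H).dist none (some x) ≠ (K1join H).dist (some a) (some x) ↔
      x = a ∨ ¬H.Adj a x := by
  rw [SimpleGraph.dist_ne_dist_iff_of_dist_le_two K1join_connected K1join_dist_le_two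
    (Option.some_ne_none a).symm]
  simp [K1join_adj_none_some, K1join_adj_some_some]

end Join

section Distinguishers

variable {U : Type*} [Fintype U] [DecidableEq U] (H : SimpleGraph U) [DecidableRel H.Adj]

/-- `(N(a) △ N(b)) ∪ {a, b}`: the vertices of `H` that distinguish `a` and `b` in `K1join H`. -/
def distinguishers (a b : U) : Finset U :=
  {x | x = a ∨ x = b ∨ ¬(H.Adj a x ↔ H.Adj b x)}

variable {H}

lemma mem_distinguishers {a b x : U} :
    x ∈ distinguishers H a b ↔ x = a ∨ x = b ∨ ¬(H.Adj a x ↔ H.Adj b x) := by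
  simp [distinguishers]

lemma distinguishers_comm (a b : U) : distinguishers H a b = distinguishers H b a := by
  ext x
  simp only [mem_distinguishers]
  tauto

lemma K1join_dist_some_ne_iff {a b : U} (hab : a ≠ b) (w : Option U) :
    (K1join H).dist (some a) w ≠ (K1join H).dist (some b) w ↔
      ∃ x ∈ distinguishers H a b, some x = w := by
  rw [SimpleGraph.dist_ne_dist_iff_of_dist_le_two K1join_connected K1join_dist_le_two
    (Option.some_injective _ |>.ne hab)]
  cases w with
  | none =>
    simp [(K1join_adj_none_some _).symm]
  | some x =>
    simp [mem_distinguishers, K1join_adj_some_some]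

end Distinguishers

section JoinGenerators

variable {U : Type*} [Fintype U] [DecidableEq U] {H : SimpleGraph U} [DecidableRel H.Adj]

lemma le_card_distinguishers_inter_eraseNone {k : ℕ} {S : Finset (Option U)}
    (hS : kMetricGen (K1join H) k S) {a b : U} (hab : a ≠ b) :
    k ≤ #(distinguishers H a b ∩ S.eraseNone) := by
  obtain ⟨T, hTS, hkT, hT⟩ := hS (some a) (some b) (Option.some_injective _ |>.ne hab)
  have hsub : T ⊆ (distinguishers H a b ∩ S.eraseNone).map .some := by
    intro w hw
    obtain ⟨x, hx, rfl⟩ := (K1join_dist_some_ne_iff hab w).mp (hT w hw)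
    simpa [hx] using hTS hw
  exact hkT.trans ((card_le_card hsub).trans (card_map _).le)

lemma kMetricGen_K1join_map_some {k : ℕ} {R : Finset U}
    (hrim : ∀ a b, a ≠ b → k ≤ #(distinguishers H a b ∩ R))
    (hcenter : ∀ a, k ≤ #{x ∈ R | ¬H.Adj a x}) :
    kMetricGen (K1join H) k (R.map .some) := by
  have center : ∀ a, ∃ T : Finset (Option U), ↑T ⊆ (↑(R.map .some) : Set (Option U)) ∧
      k ≤ #T ∧ ∀ w ∈ T, (K1join H).dist none w ≠ (K1join H).dist (some a) w := by
    intro a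
    refine ⟨{x ∈ R | ¬H.Adj a x}.map .some,
      coe_subset.mpr (map_subset_map.mpr (filter_subset _ _)),
      (hcenter a).trans (card_map _).ge, ?_⟩
    simp only [mem_map, mem_filter, Function.Embedding.some_apply]
    rintro _ ⟨x, ⟨-, hx⟩, rfl⟩
    exact (K1join_dist_none_ne_iff a x).mpr (.inr hx)
  rintro (_ | a) (_ | b) huv
  · exact absurd rfl huv
  · exact center b
  · obtain ⟨T, hTR, hkT, hT⟩ := center a
    exact ⟨T, hTR, hkT, fun w hw => (hT w hw).symm⟩
  · have hab : a ≠ b := fun h => huv (h ▸ rfl)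
    refine ⟨(distinguishers H a b ∩ R).map .some,
      coe_subset.mpr (map_subset_map.mpr inter_subset_right),
      (hrim a b hab).trans (card_map _).ge, fun w hw => (K1join_dist_some_ne_iff hab w).mpr ?_⟩
    obtain ⟨x, hx, rfl⟩ := mem_map.mp hw
    exact ⟨x, (mem_inter.mp hx).1, rfl⟩

end JoinGenerators

lemma kMetricBasis.kMetricDim_eq {V : Type*} [Fintype V] {G : SimpleGraph V} {k : ℕ}
    {B : Finset V} (hB : kMetricBasis G k B) : kMetricDim G k = #B :=
  le_antisymm (Nat.sInf_le ⟨B, hB.1, rfl⟩)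
    (le_csInf ⟨_, B, hB.1, rfl⟩ (by rintro _ ⟨S, hS, rfl⟩; exact hB.2 S hS))

lemma Finset.card_image_inter_of_injOn {α β : Type*} [DecidableEq β] {f : α → β}
    {D : Finset α} (hf : Set.InjOn f D) (R : Finset β) :
    #(D.image f ∩ R) = #{t ∈ D | f t ∈ R} := by
  rw [← filter_mem_eq_inter, filter_image, card_image_of_injOn (hf.mono (filter_subset _ _))]

lemma Finset.sum_card_filter_add_mem {G ι : Type*} [AddGroup G] [Fintype G] [DecidableEq G]
    (D : Finset ι) (φ : ι → G) (R : Finset G) :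
    ∑ x : G, #{t ∈ D | x + φ t ∈ R} = #D * #R := by
  have translate (t : ι) : ∑ x : G, (if x + φ t ∈ R then 1 else 0) = #R := by
    rw [Fintype.sum_equiv (Equiv.addRight (φ t)) (fun x => if x + φ t ∈ R then 1 else 0)
      (fun y => if y ∈ R then 1 else 0) (fun _ => rfl)]
    simp
  simp_rw [card_filter]
  rw [sum_comm, sum_congr rfl fun t _ => translate t, sum_const, smul_eq_mul]

lemma Finset.card_filter_range_succ_le (m : ℕ) {p : ℕ → Prop} [DecidablePred p] :
    #{t ∈ range (m + 1) | p t} ≤ #{t ∈ range m | p t} + 1 := by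
  rw [range_add_one, filter_insert]
  split_ifs
  exacts [card_insert_le _ _, Nat.le_succ _]

lemma Finset.card_filter_mem_compl_add_card_filter_mem {α β : Type*} [Fintype β]
    [DecidableEq β] (D : Finset α) (f : α → β) (M : Finset β) :
    #{t ∈ D | f t ∈ Mᶜ} + #{t ∈ D | f t ∈ M} = #D := by
  simpa only [mem_compl, add_comm] using card_filter_add_card_filter_not (s := D)
    (p := fun t => f t ∈ M)

lemma Finset.mul_le_card_mul_of_forall_le {G ι : Type*} [AddGroup G] [Fintype G] [DecidableEq G]
    {D : Finset ι} {φ : ι → G} {R : Finset G} {k : ℕ}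
    (h : ∀ x, k ≤ #{t ∈ D | x + φ t ∈ R}) :
    Fintype.card G * k ≤ #D * #R := by
  rw [← sum_card_filter_add_mem D φ R, ← smul_eq_mul, ← card_univ]
  exact card_nsmul_le_sum _ _ _ fun x _ => h x

lemma Finset.card_mul_le_mul_of_forall_le {G ι : Type*} [AddGroup G] [Fintype G] [DecidableEq G]
    {D : Finset ι} {φ : ι → G} {R : Finset G} {j : ℕ}
    (h : ∀ x, #{t ∈ D | x + φ t ∈ R} ≤ j) :
    #D * #R ≤ Fintype.card G * j := by
  rw [← sum_card_filter_add_mem D φ R, ← smul_eq_mul, ← card_univ]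
  exact sum_le_card_nsmul _ _ _ fun x _ => h x

def everyNth {n : ℕ} (p : ℕ) : Finset (Fin n) := {x | p ∣ x.val + 1}

lemma card_everyNth {n : ℕ} (p : ℕ) : #(everyNth p : Finset (Fin n)) = n / p := by
  rw [everyNth, ← card_map Fin.valEmbedding, ← Nat.card_multiples n p]
  congr 1
  ext e
  simp only [mem_map, mem_filter, mem_univ, true_and, Fin.valEmbedding_apply, Fin.exists_iff,
    exists_and_left, exists_prop, exists_eq_right_right, mem_range]
  omega

section Cycle

open Fin.CommRing

variable {n : ℕ} [NeZero n]

lemma Fin.natCast_eq_natCast_iff {t u : ℕ} (ht : t < n) (hu : u ≤ n) :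
    (t : Fin n) = u ↔ t = u ∨ t = 0 ∧ u = n := by
  rw [Fin.ext_iff, Fin.val_natCast, Fin.val_natCast, Nat.mod_eq_of_lt ht]
  rcases hu.lt_or_eq with hu | rfl
  · rw [Nat.mod_eq_of_lt hu]; omega
  · rw [Nat.mod_self]; omega

lemma Fin.add_natCast_inj (x : Fin n) {s t : ℕ} (hs : s < n) (ht : t < n) :
    x + (s : Fin n) = x + t ↔ s = t := by
  rw [add_right_inj, Fin.natCast_eq_natCast_iff hs ht.le]
  omega

-- Measuring vertices as offsets from a common base `x` turns every statement about a few
-- nearby vertices of the cycle into linear arithmetic on the offsets, which `omega` closes.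
lemma cycleGraph_adj_add_natCast (hn : 2 ≤ n) (x : Fin n) {s t : ℕ} (hs : s < n)
    (ht : t < n) :
    (cycleGraph n).Adj (x + s) (x + t) ↔
      t = s + 1 ∨ s = t + 1 ∨ s = 0 ∧ t + 1 = n ∨ t = 0 ∧ s + 1 = n := by
  obtain ⟨m, rfl⟩ := Nat.exists_eq_add_of_le' hn
  have shift (u v : ℕ) :
      x + (u : Fin (m + 2)) - (x + v) = 1 ↔ (u : Fin (m + 2)) = (v + 1 : ℕ) := by
    rw [sub_eq_iff_eq_add, show 1 + (x + (v : Fin (m + 2))) = x + (v + 1 : ℕ) by push_cast; ring,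
      add_right_inj]
  rw [cycleGraph_adj, shift, shift, Fin.natCast_eq_natCast_iff hs (by omega),
    Fin.natCast_eq_natCast_iff ht (by omega)]
  omega

lemma Fin.injOn_add_natCast (x : Fin n) {D : Finset ℕ} (hD : ∀ s ∈ D, s < n) :
    Set.InjOn (fun t : ℕ => x + (t : Fin n)) D :=
  fun s hs t ht h => (Fin.add_natCast_inj x (hD s hs) (hD t ht)).mp h

lemma Fin.add_natCast_mem_image_iff (x : Fin n) {D : Finset ℕ} (hD : ∀ s ∈ D, s < n) {t : ℕ}
    (ht : t < n) : x + (t : Fin n) ∈ D.image (fun s : ℕ => x + (s : Fin n)) ↔ t ∈ D := by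
  refine ⟨fun h => ?_, mem_image_of_mem _⟩
  obtain ⟨s, hs, hst⟩ := mem_image.mp h
  exact (Fin.add_natCast_inj x (hD s hs) ht).mp hst ▸ hs

lemma Fin.exists_add_natCast_eq (x y : Fin n) : ∃ t < n, x + (t : Fin n) = y :=
  ⟨(y - x).val, (y - x).isLt, by simp⟩

lemma distinguishers_cycleGraph_add_one_add_two (hn : 6 ≤ n) (x : Fin n) :
    distinguishers (cycleGraph n) (x + 1) (x + 2) =
      (range 4).image (fun t : ℕ => x + (t : Fin n)) := by
  ext y
  obtain ⟨t, ht, rfl⟩ := Fin.exists_add_natCast_eq x y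
  rw [Fin.add_natCast_mem_image_iff x (by simp only [mem_range]; omega) ht, mem_distinguishers,
    show x + 1 = x + ((1 : ℕ) : Fin n) by simp, show x + 2 = x + ((2 : ℕ) : Fin n) by simp]
  simp (disch := omega) only [Fin.add_natCast_inj, cycleGraph_adj_add_natCast, mem_range]
  omega

lemma distinguishers_cycleGraph_add_one_add_three (hn : 6 ≤ n) (x : Fin n) :
    distinguishers (cycleGraph n) (x + 1) (x + 3) =
      ({0, 1, 3, 4} : Finset ℕ).image (fun t : ℕ => x + (t : Fin n)) := by
  ext y
  obtain ⟨t, ht, rfl⟩ := Fin.exists_add_natCast_eq x y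
  have hD : ∀ s ∈ ({0, 1, 3, 4} : Finset ℕ), s < n := by
    simp only [mem_insert, mem_singleton, forall_eq_or_imp, forall_eq]; omega
  rw [Fin.add_natCast_mem_image_iff x hD ht, mem_distinguishers,
    show x + 1 = x + ((1 : ℕ) : Fin n) by simp, show x + 3 = x + ((3 : ℕ) : Fin n) by simp]
  simp (disch := omega) only [Fin.add_natCast_inj, cycleGraph_adj_add_natCast, mem_insert,
    mem_singleton]
  omega

lemma card_add_card_le_card_distinguishers_cycleGraph_inter (x : Fin n) {d : ℕ} (hd : 3 ≤ d)
    (hdn : 2 * d ≤ n) (R : Finset (Fin n)) :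
    #{t ∈ range 3 | x + ((t : ℕ) : Fin n) ∈ R} +
        #{t ∈ range 3 | x + d + ((t : ℕ) : Fin n) ∈ R} ≤
      #(distinguishers (cycleGraph n) (x + 1) (x + (d + 1 : ℕ)) ∩ R) := by
  set A₁ := (range 3).image (fun t : ℕ => x + (t : Fin n))
  set A₂ := (range 3).image (fun t : ℕ => x + d + (t : Fin n))
  have shift (t : ℕ) : x + (d : Fin n) + t = x + (d + t : ℕ) := by push_cast; ring
  have mem (t : ℕ) (ht : t < 3 ∨ d ≤ t ∧ t < d + 3) :
      x + (t : Fin n) ∈ distinguishers (cycleGraph n) (x + 1) (x + (d + 1 : ℕ)) := by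
    rw [mem_distinguishers, show x + 1 = x + ((1 : ℕ) : Fin n) by simp]
    simp (disch := omega) only [Fin.add_natCast_inj, cycleGraph_adj_add_natCast]
    omega
  have hA : A₁ ∪ A₂ ⊆ distinguishers (cycleGraph n) (x + 1) (x + (d + 1 : ℕ)) := by
    simp only [union_subset_iff, image_subset_iff, mem_range, A₁, A₂, shift]
    exact ⟨fun t ht => mem t (by omega), fun t ht => mem (d + t) (by omega)⟩
  have hdisj : Disjoint A₁ A₂ := by
    simp only [A₁, A₂, Finset.disjoint_left, mem_image, mem_range, shift, not_exists, not_and]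
    rintro _ ⟨s, hs, rfl⟩ t ht h
    rw [Fin.add_natCast_inj x (by omega) (by omega)] at h
    omega
  have hinj (y : Fin n) := Fin.injOn_add_natCast y (D := range 3) (by simp only [mem_range]; omega)
  calc _ = #(A₁ ∩ R) + #(A₂ ∩ R) := by
        rw [card_image_inter_of_injOn (hinj x), card_image_inter_of_injOn (hinj (x + d))]
    _ = #((A₁ ∪ A₂) ∩ R) := by
        rw [union_inter_distrib_right,
          card_union_of_disjoint (hdisj.mono inter_subset_left inter_subset_left)]
    _ ≤ _ := card_le_card (inter_subset_inter_right hA)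

/-- The two kinds of windows are the distinguisher sets of the pairs `(x + 1, x + 2)` and
`(x + 1, x + 3)` of the cycle. -/
def MeetsWindows (k : ℕ) (R : Finset (Fin n)) : Prop :=
  ∀ x : Fin n, k ≤ #{t ∈ range 4 | x + ((t : ℕ) : Fin n) ∈ R} ∧
    k ≤ #{t ∈ ({0, 1, 3, 4} : Finset ℕ) | x + ((t : ℕ) : Fin n) ∈ R}

lemma le_card_distinguishers_cycleGraph_add_inter (hn : 6 ≤ n) {k : ℕ} (hk : 2 ≤ k)
    {R : Finset (Fin n)} (hR : MeetsWindows k R) (y : Fin n) {d : ℕ} (hd : 0 < d)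
    (hdn : 2 * d ≤ n) : k ≤ #(distinguishers (cycleGraph n) y (y + d) ∩ R) := by
  obtain ⟨x, rfl⟩ : ∃ x, y = x + 1 := ⟨y - 1, by ring⟩
  rw [show x + 1 + (d : Fin n) = x + ((d + 1 : ℕ) : Fin n) by push_cast; ring]
  rcases (by omega : d = 1 ∨ d = 2 ∨ 3 ≤ d) with rfl | rfl | hd
  · rw [show x + ((1 + 1 : ℕ) : Fin n) = x + 2 by norm_num,
      distinguishers_cycleGraph_add_one_add_two hn,
      card_image_inter_of_injOn (Fin.injOn_add_natCast x (by simp only [mem_range]; omega))]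
    exact (hR x).1
  · rw [show x + ((2 + 1 : ℕ) : Fin n) = x + 3 by norm_num,
      distinguishers_cycleGraph_add_one_add_three hn,
      card_image_inter_of_injOn (Fin.injOn_add_natCast x fun s hs => by
        simp only [mem_insert, mem_singleton] at hs; omega)]
    exact (hR x).2
  · -- two disjoint triples, each meeting `R` in at least `k - 1` vertices, and `2 (k - 1) ≥ k`
    have := card_add_card_le_card_distinguishers_cycleGraph_inter x hd hdn R
    have : #{t ∈ range 4 | x + ((t : ℕ) : Fin n) ∈ R} ≤ _ := card_filter_range_succ_le 3
    have : #{t ∈ range 4 | x + d + ((t : ℕ) : Fin n) ∈ R} ≤ _ := card_filter_range_succ_le 3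
    have := (hR x).1
    have := (hR (x + d)).1
    omega

lemma le_card_distinguishers_cycleGraph_inter (hn : 6 ≤ n) {k : ℕ} (hk : 2 ≤ k)
    {R : Finset (Fin n)} (hR : MeetsWindows k R) {a b : Fin n} (hab : a ≠ b) :
    k ≤ #(distinguishers (cycleGraph n) a b ∩ R) := by
  obtain ⟨d, hdn, rfl⟩ := Fin.exists_add_natCast_eq a b
  have hd : d ≠ 0 := by rintro rfl; simp at hab
  rcases le_or_gt (2 * d) n with h | h
  · exact le_card_distinguishers_cycleGraph_add_inter hn hk hR a (by omega) h
  · have ha : a + d + ((n - d : ℕ) : Fin n) = a := by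
      rw [Nat.cast_sub hdn.le, Fin.natCast_self]; ring
    rw [distinguishers_comm]
    simpa only [ha] using le_card_distinguishers_cycleGraph_add_inter hn hk hR (a + d)
      (d := n - d) (by omega) (by omega)

lemma meetsWindows_of_le_card_distinguishers (hn : 6 ≤ n) {k : ℕ} {R : Finset (Fin n)}
    (hR : ∀ a b, a ≠ b → k ≤ #(distinguishers (cycleGraph n) a b ∩ R)) :
    MeetsWindows k R := by
  intro x
  have hne (c : ℕ) (hc : c < 4) (hc0 : c ≠ 1) : x + 1 ≠ x + (c : Fin n) := by
    rw [show x + 1 = x + ((1 : ℕ) : Fin n) by simp, Ne,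
      Fin.add_natCast_inj x (by omega) (by omega)]
    exact hc0.symm
  have h₁ := hR _ _ (hne 2 (by norm_num) (by norm_num))
  have h₂ := hR _ _ (hne 3 (by norm_num) (by norm_num))
  rw [Nat.cast_ofNat, distinguishers_cycleGraph_add_one_add_two hn,
    card_image_inter_of_injOn (Fin.injOn_add_natCast x (by simp only [mem_range]; omega))] at h₁
  rw [Nat.cast_ofNat, distinguishers_cycleGraph_add_one_add_three hn,
    card_image_inter_of_injOn (Fin.injOn_add_natCast x fun s hs => by
      simp only [mem_insert, mem_singleton] at hs; omega)] at h₂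
  exact ⟨h₁, h₂⟩

def IsSeparated (g : ℕ) (M : Finset (Fin n)) : Prop :=
  ∀ x ∈ M, ∀ s : ℕ, 0 < s → s ≤ g → x + (s : Fin n) ∉ M

lemma IsSeparated.card_filter_le_one {g : ℕ} {M : Finset (Fin n)} (hM : IsSeparated g M)
    (x : Fin n) {D : Finset ℕ} (hD : ∀ s ∈ D, ∀ t ∈ D, s ≤ t → t ≤ s + g) :
    #{t ∈ D | x + ((t : ℕ) : Fin n) ∈ M} ≤ 1 := by
  refine card_le_one.mpr fun s hs t ht => ?_
  simp only [mem_filter] at hs ht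
  wlog hst : s ≤ t generalizing s t
  · exact (this t s ht hs (by omega)).symm
  by_contra hne
  refine hM _ hs.2 (t - s) (by omega) (by have := hD s hs.1 t ht.1 hst; omega) ?_
  rw [add_assoc, ← Nat.cast_add, Nat.add_sub_cancel' hst]
  exact ht.2

lemma IsSeparated.card_mul_le {g : ℕ} {M : Finset (Fin n)} (hM : IsSeparated g M) :
    (g + 1) * #M ≤ n := by
  simpa using card_mul_le_mul_of_forall_le (D := range (g + 1)) (φ := Nat.cast)
    fun x => hM.card_filter_le_one x fun s hs t ht _ => by
      simp only [mem_range] at hs ht; omega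

lemma isSeparated_everyNth {p : ℕ} (hp : p ≤ n) :
    IsSeparated (p - 1) (everyNth p : Finset (Fin n)) := by
  intro x hx s hs hsp hxs
  simp only [everyNth, mem_filter, mem_univ, true_and] at hx hxs
  have hx' := x.isLt
  have hval : (x + (s : Fin n)).val = x.val + s ∨ (x + (s : Fin n)).val + n = x.val + s := by
    rw [Fin.val_add, Fin.val_natCast, Nat.mod_eq_of_lt (by omega : s < n)]
    rcases lt_or_ge (x.val + s) n with h | h
    · exact .inl (Nat.mod_eq_of_lt h)
    · right; rw [Nat.mod_eq_sub_mod h, Nat.mod_eq_of_lt (by omega)]; omega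
  generalize (x + (s : Fin n)).val = v at hval hxs
  rcases hval with h | h
  · rw [h, show x.val + s + 1 = x.val + 1 + s by ring] at hxs
    have := Nat.le_of_dvd hs ((Nat.dvd_add_right hx).mp hxs)
    omega
  · have := Nat.le_of_dvd (by omega) hxs
    omega

lemma MeetsWindows.mul_le_four_mul_card {k : ℕ} {R : Finset (Fin n)} (hR : MeetsWindows k R) :
    n * k ≤ 4 * #R := by
  simpa using mul_le_card_mul_of_forall_le (D := range 4) (φ := Nat.cast) fun x => (hR x).1

lemma MeetsWindows.isSeparated_compl {R : Finset (Fin n)} (hR : MeetsWindows 3 R) :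
    IsSeparated 4 Rᶜ := by
  intro x hx s hs hs4 hxs
  obtain ⟨D, hD, h0, hsD, h3⟩ : ∃ D : Finset ℕ, #D = 4 ∧ 0 ∈ D ∧ s ∈ D ∧
      3 ≤ #{t ∈ D | x + ((t : ℕ) : Fin n) ∈ R} := by
    rcases (by omega : s ≤ 3 ∨ s = 4) with h | rfl
    · exact ⟨range 4, by simp, by simp, by simp only [mem_range]; omega, (hR x).1⟩
    · exact ⟨{0, 1, 3, 4}, rfl, by simp, by simp, (hR x).2⟩
  have hsub : ({0, s} : Finset ℕ) ⊆ {t ∈ D | x + ((t : ℕ) : Fin n) ∈ Rᶜ} := by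
    simp only [insert_subset_iff, singleton_subset_iff, mem_filter, Nat.cast_zero, add_zero]
    exact ⟨⟨h0, hx⟩, hsD, hxs⟩
  have := card_le_card hsub
  have := card_filter_mem_compl_add_card_filter_mem D (fun t : ℕ => x + (t : Fin n)) R
  rw [card_pair (by omega)] at *
  omega

lemma meetsWindows_univ : MeetsWindows 4 (univ : Finset (Fin n)) :=
  fun _ => ⟨by simp, by simp⟩

lemma meetsWindows_compl_of_isSeparated_four {M : Finset (Fin n)} (hM : IsSeparated 4 M) :
    MeetsWindows 3 Mᶜ := by
  intro x
  have h₁ := hM.card_filter_le_one x (D := range 4) fun s hs t ht _ => by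
    simp only [mem_range] at hs ht; omega
  have h₂ := hM.card_filter_le_one x (D := {0, 1, 3, 4}) fun s hs t ht _ => by
    simp only [mem_insert, mem_singleton] at hs ht; omega
  have h₃ := card_filter_mem_compl_add_card_filter_mem (range 4)
    (fun t : ℕ => x + (t : Fin n)) M
  have h₄ := card_filter_mem_compl_add_card_filter_mem {0, 1, 3, 4}
    (fun t : ℕ => x + (t : Fin n)) M
  rw [card_range] at h₃
  rw [show #({0, 1, 3, 4} : Finset ℕ) = 4 from rfl] at h₄
  exact ⟨by omega, by omega⟩

lemma meetsWindows_compl_of_isSeparated_one {M : Finset (Fin n)} (hM : IsSeparated 1 M) :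
    MeetsWindows 2 Mᶜ := by
  intro x
  have pair (s : ℕ) : #{t ∈ ({s, s + 1} : Finset ℕ) | x + ((t : ℕ) : Fin n) ∈ M} ≤ 1 :=
    hM.card_filter_le_one x fun a ha b hb _ => by
      simp only [mem_insert, mem_singleton] at ha hb; omega
  have two_pairs (s t : ℕ) :
      #{u ∈ ({s, s + 1} ∪ {t, t + 1} : Finset ℕ) | x + ((u : ℕ) : Fin n) ∈ M} ≤ 2 := by
    rw [filter_union]
    exact (card_union_le _ _).trans (add_le_add (pair s) (pair t))
  rw [show range 4 = ({0, 0 + 1} ∪ {2, 2 + 1} : Finset ℕ) from rfl,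
    show ({0, 1, 3, 4} : Finset ℕ) = {0, 0 + 1} ∪ {3, 3 + 1} from rfl]
  have h₁ := card_filter_mem_compl_add_card_filter_mem ({0, 0 + 1} ∪ {2, 2 + 1})
    (fun t : ℕ => x + (t : Fin n)) M
  have h₂ := card_filter_mem_compl_add_card_filter_mem ({0, 0 + 1} ∪ {3, 3 + 1})
    (fun t : ℕ => x + (t : Fin n)) M
  rw [show #({0, 0 + 1} ∪ {2, 2 + 1} : Finset ℕ) = 4 from rfl] at h₁
  rw [show #({0, 0 + 1} ∪ {3, 3 + 1} : Finset ℕ) = 4 from rfl] at h₂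
  exact ⟨by linarith [two_pairs 0 2], by linarith [two_pairs 0 3]⟩

lemma card_filter_cycleGraph_adj_le_two (hn : 2 ≤ n) (a : Fin n) (R : Finset (Fin n)) :
    #{x ∈ R | (cycleGraph n).Adj a x} ≤ 2 := by
  obtain ⟨m, rfl⟩ := Nat.exists_eq_add_of_le' hn
  calc #{x ∈ R | (cycleGraph (m + 2)).Adj a x}
      ≤ #((cycleGraph (m + 2)).neighborFinset a) :=
        card_le_card fun x hx => by simpa using (mem_filter.mp hx).2
    _ ≤ 2 := by rw [cycleGraph_neighborFinset]; exact card_le_two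

lemma meetsWindows_eraseNone (hn : 6 ≤ n) {k : ℕ} {S : Finset (Option (Fin n))}
    (hS : kMetricGen (K1join (cycleGraph n)) k S) : MeetsWindows k S.eraseNone :=
  meetsWindows_of_le_card_distinguishers hn fun _ _ hab =>
    le_card_distinguishers_inter_eraseNone hS hab

lemma kMetricGen_K1join_cycleGraph_map_some (hn : 6 ≤ n) {k : ℕ} (hk : 2 ≤ k)
    {R : Finset (Fin n)} (hR : MeetsWindows k R) (hcard : k + 2 ≤ #R) :
    kMetricGen (K1join (cycleGraph n)) k (R.map .some) := by
  refine kMetricGen_K1join_map_some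
    (fun _ _ hab => le_card_distinguishers_cycleGraph_inter hn hk hR hab) fun a => ?_
  have := card_filter_add_card_filter_not (s := R) (p := fun x => (cycleGraph n).Adj a x)
  have := card_filter_cycleGraph_adj_le_two (by omega) a R
  omega

lemma kMetricDim_K1join_cycleGraph_eq (hn : 6 ≤ n) {k : ℕ} (hk : 2 ≤ k) {R : Finset (Fin n)}
    (hR : MeetsWindows k R) (hcard : k + 2 ≤ #R)
    (hmin : ∀ R' : Finset (Fin n), MeetsWindows k R' → #R ≤ #R') :
    kMetricDim (K1join (cycleGraph n)) k = #R := by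
  refine (kMetricBasis.kMetricDim_eq ⟨kMetricGen_K1join_cycleGraph_map_some hn hk hR hcard,
    fun S hS => ?_⟩).trans (card_map _)
  calc #(R.map .some) = #R := card_map _
    _ ≤ #S.eraseNone := hmin _ (meetsWindows_eraseNone hn hS)
    _ ≤ #S := card_eraseNone_le S

end Cycle

lemma kMetricDim_K1join_cycleGraph_two {n : ℕ} (hn : 7 ≤ n) :
    kMetricDim (K1join (cycleGraph n)) 2 = (n + 1) / 2 := by
  have : NeZero n := ⟨by omega⟩
  have hcard : #(everyNth 2 : Finset (Fin n))ᶜ = (n + 1) / 2 := by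
    rw [card_compl, card_everyNth, Fintype.card_fin]; omega
  refine (kMetricDim_K1join_cycleGraph_eq (by omega) le_rfl
    (meetsWindows_compl_of_isSeparated_one (isSeparated_everyNth (by omega)))
    (by omega) fun R hR => ?_).trans hcard
  have := hR.mul_le_four_mul_card
  omega

lemma kMetricDim_K1join_cycleGraph_three {n : ℕ} (hn : 6 ≤ n) :
    kMetricDim (K1join (cycleGraph n)) 3 = n - n / 5 := by
  have : NeZero n := ⟨by omega⟩
  have card_compl_eq (R : Finset (Fin n)) : #Rᶜ = n - #R := by
    rw [card_compl, Fintype.card_fin]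
  have hcard : #(everyNth 5 : Finset (Fin n))ᶜ = n - n / 5 := by
    rw [card_compl_eq, card_everyNth]
  refine (kMetricDim_K1join_cycleGraph_eq (by omega) (by norm_num)
    (meetsWindows_compl_of_isSeparated_four (isSeparated_everyNth (by omega)))
    (by omega) fun R hR => ?_).trans hcard
  have := hR.isSeparated_compl.card_mul_le
  rw [card_compl_eq] at this
  omega

lemma kMetricDim_K1join_cycleGraph_four {n : ℕ} (hn : 6 ≤ n) :
    kMetricDim (K1join (cycleGraph n)) 4 = n := by
  have : NeZero n := ⟨by omega⟩
  have hcard : #(univ : Finset (Fin n)) = n := by rw [card_univ, Fintype.card_fin]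
  refine (kMetricDim_K1join_cycleGraph_eq (by omega) (by norm_num) meetsWindows_univ
    (by omega) fun R hR => ?_).trans hcard
  have := hR.mul_le_four_mul_card
  omega

/-- for `n ≥ 7`, `dim₂(W_{1,n}) = ⌈n/2⌉`, `dim₃(W_{1,n}) = n - ⌊n/5⌋` and
`dim₄(W_{1,n}) = n`. -/
theorem stmt_19 (n : ℕ) (hn : 7 ≤ n) :
    kMetricDim (K1join (SimpleGraph.cycleGraph n)) 2 = (n + 1) / 2 ∧
      kMetricDim (K1join (SimpleGraph.cycleGraph n)) 3 = n - n / 5 ∧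
      kMetricDim (K1join (SimpleGraph.cycleGraph n)) 4 = n :=
  ⟨kMetricDim_K1join_cycleGraph_two hn, kMetricDim_K1join_cycleGraph_three (by omega),
    kMetricDim_K1join_cycleGraph_four (by omega)⟩
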